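/- Let k ≥ 6 be an integer and suppose K_N has a red-blue edge coloring with no red copy of C_{2k+1}. Let {W_1, W_2, W_3} be a partition of the vertex set of K_N and let X_i ⊆ W_i for i ∈ {1,2,3} be such that each (W_i, X_i) is a red hedgehog, with |X_1| ≥ k+1, |X_2| ≥ k and |X_3| ≥ 1. Then there do not exist two vertex-disjoint red paths, each having one endpoint in W_1, the other endpoint in W_2, and all internal vertices outside W_1 ∪ W_2. -/

import Mathlib

/-- `G` contains a cycle of length `n` (a copy of `C_n`). -/
def HasNCycle {V : Type*} (G : SimpleGraph V) (n : ℕ) : Prop :=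
  ∃ (v : V) (c : G.Walk v v), c.IsCycle ∧ c.length = n

/-- `(W, X)` is a hedgehog in `G`: `X ⊆ W`, `X` induces a complete subgraph,
and every vertex of `W \ X` is adjacent to every vertex of `X`. -/
def IsHedgehog {V : Type*} (G : SimpleGraph V) (W X : Finset V) : Prop :=
  X ⊆ W ∧ (∀ x ∈ X, ∀ y ∈ X, x ≠ y → G.Adj x y) ∧
    (∀ v ∈ W, v ∉ X → ∀ x ∈ X, G.Adj v x)

/-!
Call a red path between two vertices of `W₁` whose interior avoids `W₁` a return path. A return
path with `ℓ` interior vertices, `k ≤ ℓ ≤ 2k - 2`, closes through `2k - 1 - ℓ` vertices of the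
clique `X₁` into a red `C_{2k+1}`; so it suffices to build one from the two crossing paths
`P₁ : a₁ → b₁` and `P₂ : a₂ → b₂`. Their interiors lie in `W₃`, and a fixed `x ∈ X₃` is adjacent
to all of `W₃`; by symmetry `x ∉ P₂`.
* If `P₁` and `P₂` have at most `2k - 5` interior vertices in total, join `b₁` to `b₂` through
  `X₂` and run `P₁`, this link and `P₂` backwards; padding inside `X₂` brings the length into range.
* If only `P₂` is that short, first shortcut `P₁` through `x` to at most three interior vertices
  (symmetrically if `P₁` has no interior vertex).
* Otherwise `P₂` is long: go from `a₁` to `x` (through the first interior vertex of `P₁`), jump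
  to the right vertex of `P₂` and follow `P₂` back to `a₂`, giving exactly `k` interior vertices.
-/

open Finset

lemma List.nodup_cons_append_singleton {α : Type*} {a b : α} {l : List α} :
    (a :: l ++ [b]).Nodup ↔ l.Nodup ∧ a ∉ l ∧ b ∉ l ∧ a ≠ b := by
  simp only [List.cons_append, List.nodup_cons, List.nodup_append, List.mem_append,
    List.mem_singleton]
  grind

namespace SimpleGraph

variable {V : Type*} {G : SimpleGraph V} {a b c x : V} {A B M : List V}

lemma hasNCycle_of_isChain {m : List V} (hc : (a :: m ++ [a]).IsChain G.Adj)
    (hnd : (a :: m).Nodup) (hm : 2 ≤ m.length) : HasNCycle G (m.length + 1) := by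
  obtain ⟨c, hlen, hsupp⟩ :
      ∃ c : G.Walk a a, c.length = m.length + 1 ∧ c.support = a :: m ++ [a] :=
    let p := Walk.ofSupport _ (List.cons_ne_nil a (m ++ [a])) hc
    ⟨p.copy (by simp) (by simp),
      (Walk.length_copy _ _ _).trans ((Walk.length_ofSupport _ _).trans (by simp)),
      (Walk.support_copy _ _ _).trans (Walk.support_ofSupport _ _)⟩
  refine ⟨a, c, Walk.isCycle_iff_isPath_tail_and_le_length.mpr ⟨?_, by omega⟩, hlen⟩
  rw [Walk.isPath_def, Walk.support_tail_of_not_nil _ (Walk.not_nil_iff_lt_length.mpr (by omega)),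
    hsupp, List.cons_append, List.tail_cons]
  exact (List.perm_append_singleton a m).nodup_iff.mpr hnd

def IsPathWithInterior (G : SimpleGraph V) (a : V) (A : List V) (b : V) : Prop :=
  (a :: A ++ [b]).Nodup ∧ (a :: A ++ [b]).IsChain G.Adj

@[simp]
lemma isPathWithInterior_nil : G.IsPathWithInterior a [] b ↔ G.Adj a b := by
  simpa [IsPathWithInterior] using fun h : G.Adj a b => h.ne

namespace IsPathWithInterior

lemma nodup (h : G.IsPathWithInterior a A b) : A.Nodup :=
  (List.nodup_cons_append_singleton.mp h.1).1

lemma left_not_mem (h : G.IsPathWithInterior a A b) : a ∉ A :=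
  (List.nodup_cons_append_singleton.mp h.1).2.1

lemma right_not_mem (h : G.IsPathWithInterior a A b) : b ∉ A :=
  (List.nodup_cons_append_singleton.mp h.1).2.2.1

lemma ne (h : G.IsPathWithInterior a A b) : a ≠ b :=
  (List.nodup_cons_append_singleton.mp h.1).2.2.2

lemma reverse (h : G.IsPathWithInterior a A b) : G.IsPathWithInterior b A.reverse a := by
  have hrev : (a :: A ++ [b]).reverse = b :: A.reverse ++ [a] := by simp
  exact ⟨hrev ▸ List.nodup_reverse.mpr h.1,
    hrev ▸ List.isChain_reverse.mpr (h.2.imp fun _ _ h => h.symm)⟩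

lemma append (h₁ : G.IsPathWithInterior a A b) (h₂ : G.IsPathWithInterior b B c)
    (h : (a :: A).Disjoint (B ++ [c])) : G.IsPathWithInterior a (A ++ b :: B) c := by
  obtain ⟨hnd₁, hc₁⟩ := h₁
  obtain ⟨hnd₂, hc₂⟩ := h₂
  constructor
  · rw [List.nodup_cons_append_singleton] at hnd₁ hnd₂ ⊢
    simp only [List.Disjoint, List.mem_cons, List.mem_append] at h
    simp only [List.nodup_append, List.nodup_cons, List.mem_append, List.mem_cons]
    grind
  · have : a :: (A ++ b :: B) ++ [c] = (a :: A) ++ b :: (B ++ [c]) := by simp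
    rw [this, List.isChain_split]
    exact ⟨hc₁, by simpa using hc₂⟩

lemma take (h : G.IsPathWithInterior a A b) {i : ℕ} (hi : i < A.length) :
    G.IsPathWithInterior a (A.take i) A[i] := by
  have hpre : a :: A.take i ++ [A[i]] <+: a :: A ++ [b] := by
    rw [List.cons_append, List.cons_append, List.cons_prefix_cons, List.take_concat_get']
    exact ⟨rfl, (List.take_prefix _ _).trans (List.prefix_append _ _)⟩
  exact ⟨h.1.sublist hpre.sublist, h.2.prefix hpre⟩

lemma hasNCycle (h₁ : G.IsPathWithInterior a A b) (h₂ : G.IsPathWithInterior b B a)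
    (hAB : A.Disjoint B) (hlen : 0 < A.length + B.length) :
    HasNCycle G (A.length + B.length + 2) := by
  have hc : (a :: (A ++ b :: B) ++ [a]).IsChain G.Adj := by
    have : a :: (A ++ b :: B) ++ [a] = (a :: A ++ [b]) ++ (B ++ [a]) := by simp
    rw [this]
    exact h₁.2.append_overlap (by simpa using h₂.2) (List.cons_ne_nil b [])
  have hnd : (a :: (A ++ b :: B)).Nodup := by
    have h₁ := List.nodup_cons_append_singleton.mp h₁.1
    have h₂ := List.nodup_cons_append_singleton.mp h₂.1
    simp only [List.Disjoint] at hAB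
    simp only [List.nodup_cons, List.nodup_append, List.mem_append, List.mem_cons]
    grind
  have := hasNCycle_of_isChain hc hnd (by simp; omega)
  simpa [Nat.add_assoc] using this

lemma forall_mem {P : V → Prop} (h : G.IsPathWithInterior a A b)
    (hP : ∀ v ∈ a :: A ++ [b], v ≠ a → v ≠ b → P v) : ∀ v ∈ A, P v := fun v hv =>
  hP v (by simp [hv]) (fun e => h.left_not_mem (e ▸ hv)) fun e => h.right_not_mem (e ▸ hv)

lemma exists_isPathWithInterior_of_forall_adj (hP : G.IsPathWithInterior a M b)
    (hM : 0 < M.length) (hx : ∀ v ∈ M, v ≠ x → G.Adj v x) (hax : a ≠ x) :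
    ∃ F, F.length ≤ 1 ∧ (∀ v ∈ F, v = M[0]) ∧ G.IsPathWithInterior a F x := by
  have h₀ := hP.take hM
  rw [List.take_zero] at h₀
  by_cases hc : M[0] = x
  · exact ⟨[], by simp, by simp, hc ▸ h₀⟩
  · refine ⟨[M[0]], le_rfl, by simp, ?_⟩
    simpa using h₀.append (isPathWithInterior_nil.mpr (hx _ (List.getElem_mem hM) hc))
      (by simpa using hax.symm)

lemma exists_shortcut_of_forall_adj (hP : G.IsPathWithInterior a M b) (hM : 2 ≤ M.length)
    (hx : ∀ v ∈ M, v ≠ x → G.Adj v x) (hax : a ≠ x) (hbx : b ≠ x) :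
    ∃ I, I.length ≤ 3 ∧ (∀ v ∈ I, v ∈ M ∨ v = x) ∧ G.IsPathWithInterior a I b := by
  obtain ⟨F₁, hF₁, hF₁M, hP₁⟩ := hP.exists_isPathWithInterior_of_forall_adj (by omega) hx hax
  obtain ⟨F₂, hF₂, hF₂M, hP₂⟩ := hP.reverse.exists_isPathWithInterior_of_forall_adj (by simp; omega)
    (by simpa using hx) hbx
  have hne : M[0] ≠ M[M.length - 1] := fun h => by
    have := hP.nodup.getElem_inj_iff.mp h
    omega
  have hM₀ : M[0] ∈ M := List.getElem_mem _
  have hM₁ : M[M.length - 1] ∈ M := List.getElem_mem _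
  simp only [List.getElem_reverse, Nat.sub_zero] at hF₂M
  refine ⟨F₁ ++ x :: F₂.reverse, by simp; omega, ?_, hP₁.append hP₂.reverse ?_⟩
  · simp only [List.mem_append, List.mem_cons, List.mem_reverse]
    grind
  · have := hP.left_not_mem
    have := hP.right_not_mem
    have := hP.ne
    simp only [List.Disjoint, List.mem_cons, List.mem_append, List.mem_reverse]
    grind

end IsPathWithInterior

end SimpleGraph

open SimpleGraph

variable {V : Type*} {G : SimpleGraph V} {a b a₁ a₂ b₁ b₂ v x : V} {A F I₁ I₂ M M₁ M₂ : List V}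
  {W X W₁ W₂ X₁ X₂ : Finset V}

namespace IsHedgehog

lemma adj (h : IsHedgehog G W X) (hv : v ∈ W) (hx : x ∈ X) (hne : v ≠ x) : G.Adj v x := by
  by_cases hvX : v ∈ X
  · exact h.2.1 v hvX x hx hne
  · exact h.2.2 v hv hvX x hx

lemma exists_isPathWithInterior (h : IsHedgehog G W X) (ha : a ∈ W) (hb : b ∈ W) (hab : a ≠ b)
    {s : ℕ} (hs : 0 < s) (hsX : s + 2 ≤ #X) :
    ∃ S : List V, S.length = s ∧ (∀ v ∈ S, v ∈ W) ∧ G.IsPathWithInterior a S b := by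
  classical
  have hcard : s ≤ #(X \ {a, b}) := by
    have := le_card_sdiff {a, b} X
    have := card_le_two (a := a) (b := b)
    omega
  obtain ⟨T, hT, rfl⟩ := exists_subset_card_eq hcard
  have hTX : ∀ v ∈ T.toList, v ∈ X ∧ v ≠ a ∧ v ≠ b := fun v hv => by
    simpa using hT (mem_toList.mp hv)
  have hT0 : T.toList ≠ [] := by simpa [← nonempty_iff_ne_empty] using hs
  refine ⟨T.toList, length_toList T, fun v hv => h.1 (hTX v hv).1, ?_, ?_⟩
  · rw [List.nodup_cons_append_singleton]
    exact ⟨nodup_toList T, fun h => (hTX a h).2.1 rfl, fun h => (hTX b h).2.2 rfl, hab⟩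
  · rw [List.cons_append, List.isChain_cons, List.head?_append_of_ne_nil _ hT0]
    refine ⟨fun y hy => ?_, List.Pairwise.isChain
      (List.pairwise_append.mpr ⟨?_, List.pairwise_singleton _ _, ?_⟩)⟩
    · have hy := List.mem_of_mem_head? hy
      exact h.adj ha (hTX y hy).1 (hTX y hy).2.1.symm
    · exact (nodup_toList T).imp_of_mem fun hu hv hne => h.2.1 _ (hTX _ hu).1 _ (hTX _ hv).1 hne
    · intro u hu w hw
      rw [List.mem_singleton] at hw
      subst hw
      exact (h.adj hb (hTX u hu).1 (hTX u hu).2.2.symm).symm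

theorem hasNCycle_of_isPathWithInterior {k : ℕ} (h : IsHedgehog G W X) (hX : k + 1 ≤ #X)
    (ha : a ∈ W) (hb : b ∈ W) (hP : G.IsPathWithInterior a A b) (hAW : ∀ v ∈ A, v ∉ W)
    (hk : k ≤ A.length) (hA : A.length + 2 ≤ 2 * k) : HasNCycle G (2 * k + 1) := by
  obtain ⟨S, hS, hSW, hQ⟩ :=
    h.exists_isPathWithInterior hb ha hP.ne.symm (s := 2 * k - 1 - A.length) (by omega) (by omega)
  have := hP.hasNCycle hQ (fun v hvA hvS => hAW v hvA (hSW v hvS)) (by omega)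
  rwa [hS, show A.length + (2 * k - 1 - A.length) + 2 = 2 * k + 1 by omega] at this

theorem hasNCycle_of_detour {k : ℕ} (h : IsHedgehog G W X) (hX : k + 1 ≤ #X)
    (ha₁ : a₁ ∈ W) (ha₂ : a₂ ∈ W) (hF : G.IsPathWithInterior a₁ F x)
    (hM : G.IsPathWithInterior a₂ M b) (hx : ∀ v ∈ M, G.Adj x v)
    (hdisj : (a₁ :: F ++ [x]).Disjoint (a₂ :: M)) (hW : ∀ v ∈ F ++ x :: M, v ∉ W)
    (hk : F.length + 2 ≤ k) (hkM : k ≤ F.length + 1 + M.length) : HasNCycle G (2 * k + 1) := by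
  have hi : k - (F.length + 2) < M.length := by omega
  have htake : ∀ v ∈ M.take (k - (F.length + 2)), v ∈ M := fun v => List.mem_of_mem_take
  have hMi := List.getElem_mem hi
  simp only [List.Disjoint, List.mem_cons, List.mem_append] at hdisj hW
  have hR := (hF.append (isPathWithInterior_nil.mpr (hx _ hMi)) ?_).append (hM.take hi).reverse ?_
  · refine h.hasNCycle_of_isPathWithInterior hX ha₁ ha₂ hR ?_ (by simp; omega) (by simp; omega)
    simp only [List.mem_append, List.mem_cons, List.mem_reverse]
    grind
  all_goals
    simp only [List.Disjoint, List.mem_cons, List.mem_append, List.mem_reverse]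
    grind

end IsHedgehog

theorem hasNCycle_of_short_crossings {k : ℕ} (h₁ : IsHedgehog G W₁ X₁) (hX₁ : k + 1 ≤ #X₁)
    (h₂ : IsHedgehog G W₂ X₂) (hX₂ : k ≤ #X₂) (hW : Disjoint W₁ W₂)
    (ha₁ : a₁ ∈ W₁) (ha₂ : a₂ ∈ W₁) (hb₁ : b₁ ∈ W₂) (hb₂ : b₂ ∈ W₂)
    (hP₁ : G.IsPathWithInterior a₁ I₁ b₁) (hP₂ : G.IsPathWithInterior b₂ I₂ a₂)
    (hP : (a₁ :: I₁ ++ [b₁]).Disjoint (b₂ :: I₂ ++ [a₂]))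
    (hI : ∀ v ∈ I₁ ++ I₂, v ∉ W₁ ∧ v ∉ W₂) (hlen : I₁.length + I₂.length + 5 ≤ 2 * k) :
    HasNCycle G (2 * k + 1) := by
  have hW := disjoint_left.mp hW
  simp only [List.Disjoint, List.mem_cons, List.mem_append, List.not_mem_nil, or_false] at hP hI
  obtain ⟨S, hS, hSW, hQ⟩ := h₂.exists_isPathWithInterior hb₁ hb₂
    (fun h => hP (a := b₁) (by simp) (by simp [h]))
    (s := max 1 (k - (I₁.length + I₂.length + 2))) (by omega) (by omega)
  have hR := (hP₁.append hQ ?_).append hP₂ ?_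
  · refine h₁.hasNCycle_of_isPathWithInterior hX₁ ha₁ ha₂ hR ?_ (by simp; omega) (by simp; omega)
    simp only [List.mem_append, List.mem_cons]
    grind
  all_goals
    simp only [List.Disjoint, List.mem_cons, List.mem_append]
    grind

theorem hasNCycle_of_disjoint_crossings {k : ℕ} (hk : 6 ≤ k)
    (h₁ : IsHedgehog G W₁ X₁) (hX₁ : k + 1 ≤ #X₁) (h₂ : IsHedgehog G W₂ X₂) (hX₂ : k ≤ #X₂)
    (hW : Disjoint W₁ W₂) (ha₁ : a₁ ∈ W₁) (ha₂ : a₂ ∈ W₁) (hb₁ : b₁ ∈ W₂) (hb₂ : b₂ ∈ W₂)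
    (hP₁ : G.IsPathWithInterior a₁ M₁ b₁) (hP₂ : G.IsPathWithInterior a₂ M₂ b₂)
    (hP : (a₁ :: M₁ ++ [b₁]).Disjoint (a₂ :: M₂ ++ [b₂]))
    (hxW : x ∉ W₁ ∧ x ∉ W₂) (hMW : ∀ v ∈ M₁ ++ M₂, v ∉ W₁ ∧ v ∉ W₂)
    (hx : ∀ v ∈ M₁ ++ M₂, v ≠ x → G.Adj v x) (hxM₂ : x ∉ M₂) : HasNCycle G (2 * k + 1) := by
  have hWd := disjoint_left.mp hW
  simp only [List.Disjoint, List.mem_cons, List.mem_append] at hP hMW hx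
  have hxa₁ : a₁ ≠ x := fun h => hxW.1 (h ▸ ha₁)
  have hxb₁ : b₁ ≠ x := fun h => hxW.2 (h ▸ hb₁)
  by_cases hshort : M₁.length + M₂.length + 5 ≤ 2 * k
  · refine hasNCycle_of_short_crossings h₁ hX₁ h₂ hX₂ hW ha₁ ha₂ hb₁ hb₂ hP₁ hP₂.reverse ?_ ?_
      (by simpa using hshort) <;>
    simp only [List.Disjoint, List.mem_cons, List.mem_append, List.mem_reverse] <;> grind
  by_cases hM₂ : M₂.length + 8 ≤ 2 * k
  · obtain ⟨I, hI, hIM, hPI⟩ := hP₁.exists_shortcut_of_forall_adj (by omega)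
      (fun v hv => hx v (by simp [hv])) hxa₁ hxb₁
    refine hasNCycle_of_short_crossings h₁ hX₁ h₂ hX₂ hW ha₁ ha₂ hb₁ hb₂ hPI hP₂.reverse ?_ ?_
      (by simp; omega) <;>
    simp only [List.Disjoint, List.mem_cons, List.mem_append, List.mem_reverse] <;> grind
  rcases Nat.eq_zero_or_pos M₁.length with hM₁ | hM₁
  · rw [List.length_eq_zero_iff] at hM₁
    subst hM₁
    obtain ⟨I, hI, hIM, hPI⟩ := hP₂.exists_shortcut_of_forall_adj (by simp at hshort; omega)
      (fun v hv => hx v (by simp [hv])) (fun h => hxW.1 (h ▸ ha₂)) (fun h => hxW.2 (h ▸ hb₂))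
    refine hasNCycle_of_short_crossings h₁ hX₁ h₂ hX₂ hW ha₁ ha₂ hb₁ hb₂ hP₁ hPI.reverse ?_ ?_
      (by simp; omega) <;>
    simp only [List.Disjoint, List.mem_cons, List.mem_append, List.mem_reverse] <;> grind
  · obtain ⟨F, hF, hFM, hPF⟩ := hP₁.exists_isPathWithInterior_of_forall_adj hM₁
      (fun v hv => hx v (by simp [hv])) hxa₁
    have := List.getElem_mem hM₁
    refine h₁.hasNCycle_of_detour hX₁ ha₁ ha₂ hPF hP₂
      (fun v hv => (hx v (by simp [hv]) (fun h => hxM₂ (h ▸ hv))).symm) ?_ ?_ (by omega)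
      (by omega) <;>
    simp only [List.Disjoint, List.mem_cons, List.mem_append] <;> grind

lemma SimpleGraph.Walk.IsPath.exists_isPathWithInterior {p : G.Walk a b} (hp : p.IsPath)
    (hab : a ≠ b) : ∃ M, p.support = a :: M ++ [b] ∧ G.IsPathWithInterior a M b := by
  have hne : p.support.tail ≠ [] := List.ne_nil_of_mem (p.end_mem_tail_support_of_ne hab)
  have hs : p.support = a :: p.support.tail.dropLast ++ [b] := by
    conv_lhs => rw [← p.cons_tail_support, ← List.dropLast_append_getLast hne, List.getLast_tail,
      p.getLast_support]
    rfl
  exact ⟨_, hs, hs ▸ hp.support_nodup, hs ▸ p.isChain_adj_support⟩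

theorem stmt9 (k N : ℕ) (hk : 6 ≤ k)
    (R : SimpleGraph (Fin N))
    (hred : ¬ HasNCycle R (2 * k + 1))
    (W₁ W₂ W₃ X₁ X₂ X₃ : Finset (Fin N))
    (hd12 : Disjoint W₁ W₂) (hd13 : Disjoint W₁ W₃) (hd23 : Disjoint W₂ W₃)
    (hcover : W₁ ∪ W₂ ∪ W₃ = Finset.univ)
    (hh1 : IsHedgehog R W₁ X₁) (hh2 : IsHedgehog R W₂ X₂) (hh3 : IsHedgehog R W₃ X₃)
    (hc1 : k + 1 ≤ X₁.card) (hc2 : k ≤ X₂.card) (hc3 : 1 ≤ X₃.card) :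
    ¬ ∃ (a₁ b₁ a₂ b₂ : Fin N) (p₁ : R.Walk a₁ b₁) (p₂ : R.Walk a₂ b₂),
      p₁.IsPath ∧ p₂.IsPath ∧
      a₁ ∈ W₁ ∧ b₁ ∈ W₂ ∧ a₂ ∈ W₁ ∧ b₂ ∈ W₂ ∧
      (∀ x ∈ p₁.support, x ≠ a₁ → x ≠ b₁ → x ∉ W₁ ∪ W₂) ∧
      (∀ x ∈ p₂.support, x ≠ a₂ → x ≠ b₂ → x ∉ W₁ ∪ W₂) ∧
      (∀ x ∈ p₁.support, x ∉ p₂.support) := by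
  rintro ⟨a₁, b₁, a₂, b₂, p₁, p₂, hp₁, hp₂, ha₁, hb₁, ha₂, hb₂, hint₁, hint₂, hdisj⟩
  have hW₁₂ := disjoint_left.mp hd12
  obtain ⟨M₁, hs₁, hP₁⟩ := hp₁.exists_isPathWithInterior fun h => hW₁₂ ha₁ (h ▸ hb₁)
  obtain ⟨M₂, hs₂, hP₂⟩ := hp₂.exists_isPathWithInterior fun h => hW₁₂ ha₂ (h ▸ hb₂)
  rw [hs₁, hs₂] at hdisj
  have hM : ∀ v ∈ M₁ ++ M₂, v ∉ W₁ ∧ v ∉ W₂ := by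
    have h₁ := hP₁.forall_mem (hs₁ ▸ hint₁)
    have h₂ := hP₂.forall_mem (hs₂ ▸ hint₂)
    simp only [mem_union, not_or] at h₁ h₂
    exact List.forall_mem_append.mpr ⟨h₁, h₂⟩
  obtain ⟨x, hxX₃⟩ := card_pos.mp hc3
  have hxW : x ∉ W₁ ∧ x ∉ W₂ :=
    ⟨disjoint_right.mp hd13 (hh3.1 hxX₃), disjoint_right.mp hd23 (hh3.1 hxX₃)⟩
  have hx : ∀ v ∈ M₁ ++ M₂, v ≠ x → R.Adj v x := fun v hv =>
    hh3.adj (by simpa [hM v hv] using (hcover ▸ mem_univ v : v ∈ W₁ ∪ W₂ ∪ W₃)) hxX₃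
  by_cases hxM₂ : x ∈ M₂
  · exact hred (hasNCycle_of_disjoint_crossings hk hh1 hc1 hh2 hc2 hd12 ha₂ ha₁ hb₂ hb₁ hP₂ hP₁
      (fun v h₂ h₁ => hdisj v h₁ h₂) hxW (by simpa [or_comm] using hM)
      (by simpa [or_comm] using hx) fun h => hdisj x (by simp [h]) (by simp [hxM₂]))
  · exact hred (hasNCycle_of_disjoint_crossings hk hh1 hc1 hh2 hc2 hd12 ha₁ ha₂ hb₁ hb₂ hP₁ hP₂
      hdisj hxW hM hx hxM₂)
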